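/- Let a, b, d be real numbers with 3 ≤ a < d < b. Then for every x ∈ (1, a], φ_{d,b}(x) ≤ φ_{a,b}(x); that is, for fixed b and fixed x ∈ (1, a], the value φ_{a,b}(x) is non-increasing as a function of the first parameter on [a, d]. -/

import Mathlib

/-!
With `A = a⁻¹` the coefficients are `a₂ₘ = bᵐ A^{m²} b^{-m²}` and `a₂ₘ₊₁ = A^{m²+m} b^{-m²}`.
Grouping `φ_{a,b}(x) - φ_{d,b}(x)` into the pairs of consecutive terms `2m, 2m + 1`, each pair
is nonnegative: with `D = d⁻¹ ≤ A`, one has `A^{n+m} - D^{n+m} ≤ 2 Aᵐ (Aⁿ - Dⁿ)` for `m ≤ n`,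
and `2 x Aᵐ ≤ 2 ≤ bᵐ` for `x ≤ a`. Both series converge because `aₙ₊₁ / aₙ = 1 / (q₀ ⋯ qₙ₋₁)`.
-/

open scoped Classical

/-- Taylor coefficients of `f_{a,b}`: `a₀ = a₁ = 1`,
`aₖ = aₖ₋₁² / (aₖ₋₂ · qₖ)` where `qₖ = a` for even `k` and `qₖ = b` for odd `k`. -/
noncomputable def coeffAB (a b : ℝ) : ℕ → ℝ
  | 0 => 1
  | 1 => 1
  | n + 2 => (coeffAB a b (n + 1)) ^ 2 / (coeffAB a b n * (if Even n then a else b))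

/-- The entire function `f_{a,b}(z) = Σ aₖ zᵏ` (as a function on `ℂ`). -/
noncomputable def fAB (a b : ℝ) (z : ℂ) : ℂ := ∑' k : ℕ, (coeffAB a b k : ℂ) * z ^ k

/-- The restriction of `f_{a,b}` to the reals. -/
noncomputable def fABReal (a b x : ℝ) : ℝ := ∑' k : ℕ, coeffAB a b k * x ^ k

/-- `φ_{a,b}(x) = f_{a,b}(-x) = Σ (-1)ᵏ aₖ xᵏ` (real variable). -/
noncomputable def phiAB (a b x : ℝ) : ℝ := ∑' k : ℕ, (-1 : ℝ) ^ k * coeffAB a b k * x ^ k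

/-- `φ_{a,b}` as a function of a complex variable. -/
noncomputable def phiABC (a b : ℝ) (z : ℂ) : ℂ :=
  ∑' k : ℕ, (-1 : ℂ) ^ k * (coeffAB a b k : ℂ) * z ^ k

/-- Membership in the Laguerre–Pólya class of type I:
`f(z) = c zⁿ e^{βz} ∏ (1 + z/xₖ)` with `c ∈ ℝ`, `β ≥ 0`, `xₖ > 0`, `Σ 1/xₖ < ∞`
(the product over a countable — possibly finite or empty — index set). -/
def LaguerrePolyaI (f : ℂ → ℂ) : Prop :=
  ∃ (c : ℝ) (n : ℕ) (β : ℝ) (ι : Type) (_ : Countable ι) (x : ι → ℝ),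
    0 ≤ β ∧ (∀ i, 0 < x i) ∧ Summable (fun i => (x i)⁻¹) ∧
    ∀ z : ℂ, f z = (c : ℂ) * z ^ n * Complex.exp (β * z) * ∏' i, (1 + z / (x i : ℂ))

/-- The partial theta function `g_t(z) = Σ zᵏ t^{-k²}` (complex variable). -/
noncomputable def partialTheta (t : ℝ) (z : ℂ) : ℂ := ∑' k : ℕ, z ^ k / (t : ℂ) ^ (k ^ 2)

/-- The partial theta function restricted to the reals. -/
noncomputable def partialThetaReal (t x : ℝ) : ℝ := ∑' k : ℕ, x ^ k / t ^ (k ^ 2)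

/-- A function `f : ℂ → ℂ` has only real zeros. -/
def OnlyRealZeros (f : ℂ → ℂ) : Prop := ∀ z : ℂ, f z = 0 → ∃ r : ℝ, z = (r : ℂ)

/-- The constant `q_∞ ≈ 3.2336…`: the infimum of the set
`{t² : t > 1 and g_t has only real zeros}`. -/
noncomputable def qInfty : ℝ :=
  sInf {s : ℝ | ∃ t : ℝ, 1 < t ∧ s = t ^ 2 ∧ OnlyRealZeros (partialTheta t)}

theorem pow_add_sub_pow_add_le {R : Type*} [CommRing R] [LinearOrder R] [IsStrictOrderedRing R]
    {A D : R} (hD : 0 ≤ D) (hDA : D ≤ A) {k n : ℕ} (hkn : k ≤ n) :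
    A ^ (n + k) - D ^ (n + k) ≤ 2 * A ^ k * (A ^ n - D ^ n) := by
  have hprod : 0 ≤ (A ^ n - D ^ n) * (A ^ k - D ^ k) :=
    mul_nonneg (sub_nonneg.2 (pow_le_pow_left₀ hD hDA n)) (sub_nonneg.2 (pow_le_pow_left₀ hD hDA k))
  have hcross : A ^ k * D ^ n ≤ A ^ n * D ^ k := by
    obtain ⟨j, rfl⟩ := Nat.exists_eq_add_of_le hkn
    have hAD : 0 ≤ A ^ k * D ^ k := mul_nonneg (pow_nonneg (hD.trans hDA) k) (pow_nonneg hD k)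
    calc A ^ k * D ^ (k + j) = A ^ k * D ^ k * D ^ j := by ring
      _ ≤ A ^ k * D ^ k * A ^ j := mul_le_mul_of_nonneg_left (pow_le_pow_left₀ hD hDA j) hAD
      _ = A ^ (k + j) * D ^ k := by ring
  linear_combination hprod + hcross

theorem coeffAB_two_mul_and_two_mul_add_one {α b : ℝ} (hα : α ≠ 0) (hb : b ≠ 0) (m : ℕ) :
    coeffAB α b (2 * m) = b ^ m * α⁻¹ ^ (m * m) * b⁻¹ ^ (m * m) ∧
      coeffAB α b (2 * m + 1) = α⁻¹ ^ (m * m + m) * b⁻¹ ^ (m * m) := by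
  induction m with
  | zero => simp [coeffAB]
  | succ m ih =>
    have heven : coeffAB α b (2 * (m + 1)) =
        b ^ (m + 1) * α⁻¹ ^ ((m + 1) * (m + 1)) * b⁻¹ ^ ((m + 1) * (m + 1)) := by
      rw [show 2 * (m + 1) = 2 * m + 2 by ring, coeffAB, if_pos (even_two_mul m), ih.1, ih.2,
        show (m + 1) * (m + 1) = m * m + m + (m + 1) by ring]
      simp only [pow_add, pow_one, inv_pow]
      field_simp
    refine ⟨heven, ?_⟩
    have hodd : ¬ Even (2 * m + 1) := Nat.not_even_iff_odd.2 (odd_two_mul_add_one m)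
    rw [show 2 * (m + 1) + 1 = 2 * m + 1 + 2 by ring, coeffAB, if_neg hodd,
      show 2 * m + 1 + 1 = 2 * (m + 1) by ring, heven, ih.2,
      show (m + 1) * (m + 1) + (m + 1) = m * m + m + (2 * m + 2) by ring,
      show (m + 1) * (m + 1) = m * m + (2 * m + 1) by ring]
    simp only [pow_add, pow_one, inv_pow]
    field_simp
    ring

theorem coeffAB_two_mul {α b : ℝ} (hα : α ≠ 0) (hb : b ≠ 0) (m : ℕ) :
    coeffAB α b (2 * m) = b ^ m * α⁻¹ ^ (m * m) * b⁻¹ ^ (m * m) :=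
  (coeffAB_two_mul_and_two_mul_add_one hα hb m).1

theorem coeffAB_two_mul_add_one {α b : ℝ} (hα : α ≠ 0) (hb : b ≠ 0) (m : ℕ) :
    coeffAB α b (2 * m + 1) = α⁻¹ ^ (m * m + m) * b⁻¹ ^ (m * m) :=
  (coeffAB_two_mul_and_two_mul_add_one hα hb m).2

theorem coeffAB_pos {α b : ℝ} (hα : 0 < α) (hb : 0 < b) (k : ℕ) : 0 < coeffAB α b k := by
  obtain ⟨m, rfl | rfl⟩ := Nat.even_or_odd' k
  · rw [coeffAB_two_mul hα.ne' hb.ne']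
    positivity
  · rw [coeffAB_two_mul_add_one hα.ne' hb.ne']
    positivity

theorem coeffAB_succ_le {α b c : ℝ} (hc : 0 < c) (hcα : c ≤ α) (hcb : c ≤ b) (n : ℕ) :
    coeffAB α b (n + 1) ≤ c⁻¹ ^ n * coeffAB α b n := by
  have hpos := coeffAB_pos (hc.trans_le hcα) (hc.trans_le hcb)
  induction n with
  | zero => simp [coeffAB]
  | succ n ih =>
    have hq : c ≤ if Even n then α else b := by split_ifs <;> assumption
    have hq0 : 0 < if Even n then α else b := hc.trans_le hq
    rw [coeffAB, div_le_iff₀ (mul_pos (hpos n) hq0)]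
    calc coeffAB α b (n + 1) ^ 2
        ≤ coeffAB α b (n + 1) * (c⁻¹ ^ n * coeffAB α b n) := by
          rw [sq]; exact mul_le_mul_of_nonneg_left ih (hpos _).le
      _ = c⁻¹ ^ (n + 1) * coeffAB α b (n + 1) * (coeffAB α b n * c) := by
          rw [pow_succ]
          field_simp
      _ ≤ c⁻¹ ^ (n + 1) * coeffAB α b (n + 1) * (coeffAB α b n * if Even n then α else b) := by
          have := mul_le_mul_of_nonneg_left hq (hpos n).le
          exact mul_le_mul_of_nonneg_left this (mul_nonneg (by positivity) (hpos _).le)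

theorem summable_coeffAB_mul_pow {α b : ℝ} (hα : 1 < α) (hb : 1 < b) (x : ℝ) :
    Summable fun k ↦ coeffAB α b k * x ^ k := by
  set c := min α b
  have hc : 1 < c := lt_min hα hb
  have hsmall : ∀ᶠ n : ℕ in Filter.atTop, |x| * c⁻¹ ^ n ≤ 1 / 2 := by
    have h := (tendsto_pow_atTop_nhds_zero_of_lt_one (inv_nonneg.2 (by linarith))
      (inv_lt_one_of_one_lt₀ hc)).const_mul |x|
    rw [mul_zero] at h
    exact h.eventually (ge_mem_nhds (by norm_num))
  refine summable_of_ratio_norm_eventually_le (r := 1 / 2) (by norm_num) ?_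
  filter_upwards [hsmall] with n hn
  have hpos := coeffAB_pos (by linarith : (0 : ℝ) < α) (by linarith : (0 : ℝ) < b)
  have hstep := coeffAB_succ_le (by linarith) (min_le_left α b) (min_le_right α b) n
  simp only [norm_mul, Real.norm_eq_abs, abs_of_pos (hpos _), abs_pow, pow_succ]
  calc coeffAB α b (n + 1) * (|x| ^ n * |x|)
      ≤ c⁻¹ ^ n * coeffAB α b n * (|x| ^ n * |x|) := by gcongr
    _ = (|x| * c⁻¹ ^ n) * (coeffAB α b n * |x| ^ n) := by ring
    _ ≤ 1 / 2 * (coeffAB α b n * |x| ^ n) := by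
        gcongr
        exact mul_nonneg (hpos n).le (by positivity)

theorem coeffAB_sub_odd_mul_pow_le_even {a d b x : ℝ} (ha : 1 ≤ a) (had : a ≤ d) (hb : 2 ≤ b)
    (hx : 0 ≤ x) (hxa : x ≤ a) (m : ℕ) :
    (coeffAB a b (2 * m + 1) - coeffAB d b (2 * m + 1)) * x ^ (2 * m + 1) ≤
      (coeffAB a b (2 * m) - coeffAB d b (2 * m)) * x ^ (2 * m) := by
  rcases m.eq_zero_or_pos with rfl | hm
  · simp [coeffAB]
  have ha0 : 0 < a := by linarith
  have hd0 : d ≠ 0 := by linarith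
  have hb0 : b ≠ 0 := by positivity
  rw [coeffAB_two_mul ha0.ne' hb0, coeffAB_two_mul_add_one ha0.ne' hb0, coeffAB_two_mul hd0 hb0,
    coeffAB_two_mul_add_one hd0 hb0]
  set A := a⁻¹
  set D := d⁻¹
  have hD : 0 ≤ D := inv_nonneg.2 (by linarith)
  have hDA : D ≤ A := inv_anti₀ ha0 had
  have hxA : x * A ^ m ≤ 1 :=
    calc x * A ^ m ≤ a * A := mul_le_mul hxa (pow_le_of_le_one (by positivity)
          (inv_le_one_of_one_le₀ ha) hm.ne') (by positivity) (by linarith)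
      _ = 1 := mul_inv_cancel₀ ha0.ne'
  have hbm : 2 ≤ b ^ m := hb.trans (le_self_pow₀ (by linarith) hm.ne')
  have key : x * (A ^ (m * m + m) - D ^ (m * m + m)) ≤ b ^ m * (A ^ (m * m) - D ^ (m * m)) :=
    calc x * (A ^ (m * m + m) - D ^ (m * m + m))
        ≤ x * (2 * A ^ m * (A ^ (m * m) - D ^ (m * m))) :=
          mul_le_mul_of_nonneg_left (pow_add_sub_pow_add_le hD hDA (Nat.le_mul_self m)) hx
      _ = 2 * (x * A ^ m) * (A ^ (m * m) - D ^ (m * m)) := by ring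
      _ ≤ b ^ m * (A ^ (m * m) - D ^ (m * m)) := by
          gcongr
          · exact sub_nonneg.2 (pow_le_pow_left₀ hD hDA _)
          · linarith
  have hscale : 0 ≤ b⁻¹ ^ (m * m) * x ^ (2 * m) := by positivity
  calc (A ^ (m * m + m) * b⁻¹ ^ (m * m) - D ^ (m * m + m) * b⁻¹ ^ (m * m)) * x ^ (2 * m + 1)
      = b⁻¹ ^ (m * m) * x ^ (2 * m) * (x * (A ^ (m * m + m) - D ^ (m * m + m))) := by ring
    _ ≤ b⁻¹ ^ (m * m) * x ^ (2 * m) * (b ^ m * (A ^ (m * m) - D ^ (m * m))) :=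
        mul_le_mul_of_nonneg_left key hscale
    _ = _ := by ring

theorem tsum_nonneg_of_even_add_odd {f : ℕ → ℝ} (hf : Summable f)
    (h : ∀ m, 0 ≤ f (2 * m) + f (2 * m + 1)) : 0 ≤ ∑' k, f k := by
  have heven : Summable fun m ↦ f (2 * m) := hf.comp_injective fun p q h ↦ by omega
  have hodd : Summable fun m ↦ f (2 * m + 1) := hf.comp_injective fun p q h ↦ by omega
  rw [← tsum_even_add_odd heven hodd, ← heven.tsum_add hodd]
  exact tsum_nonneg h

/-- For `3 ≤ a < d < b` and `x ∈ (1, a]`, one has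
`φ_{d,b}(x) ≤ φ_{a,b}(x)`: for fixed `b` and `x ∈ (1, a]`, `φ_{a,b}(x)` is
non-increasing in the first parameter. -/
theorem phiAB_antitone_fst (a b d : ℝ) (ha : 3 ≤ a) (had : a < d) (hdb : d < b) :
    ∀ x ∈ Set.Ioc (1 : ℝ) a, phiAB d b x ≤ phiAB a b x := by
  rintro x ⟨hx1, hxa⟩
  have hb : 2 ≤ b := by linarith
  have hterms : ∀ α, 1 < α → Summable fun k ↦ (-1 : ℝ) ^ k * coeffAB α b k * x ^ k :=
    fun α hα ↦ (summable_coeffAB_mul_pow hα (by linarith : 1 < b) (-x)).congr fun k ↦ by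
      rw [neg_pow]; ring
  have hsa := hterms a (by linarith)
  have hsd := hterms d (by linarith)
  rw [← sub_nonneg, phiAB, phiAB, ← hsa.tsum_sub hsd]
  refine tsum_nonneg_of_even_add_odd (hsa.sub hsd) fun m ↦ ?_
  have hpair := coeffAB_sub_odd_mul_pow_le_even (by linarith) had.le hb (by linarith) hxa m
  simp only [(even_two_mul m).neg_one_pow, (odd_two_mul_add_one m).neg_one_pow]
  linarith
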